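/- Fix n ≥ 3 and let ℓ_{ξ,v} = {(v′ − t²ξ′, arctan(v_{n−1}/t) − tξ_{n−1}, t) : |t − 1| ≤ 1/10} be the φ_{n,tan}-curves, with base point p₀ = (0,0,1). Then the family of φ_{n,tan}-curves is not diffeomorphic to a family of lines: for every ε₀ > 0 there do not exist a smooth diffeomorphism F from B_{ε₀}(p₀) ⊂ ℝⁿ onto its image, maps Ξ, V : ℝ^{n−1} × ℝ^{n−1} → ℝ^{n−1}, and a neighborhood U of (0,0), such that F(ℓ_{ξ,v} ∩ B_{ε₀}(p₀)) ⊆ line_{Ξ(ξ,v), V(ξ,v)} for every (ξ,v) ∈ U. -/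

import Mathlib

open Metric Set Topology MeasureTheory

noncomputable section

/-- ξ-gradient ∇_ξφ(x,ξ). -/
def gradXi (n : ℕ) (φ : (Fin n → ℝ) → (Fin (n-1) → ℝ) → ℝ)
    (x : Fin n → ℝ) (ξ : Fin (n-1) → ℝ) : Fin (n-1) → ℝ :=
  fun j => fderiv ℝ (φ x) ξ (Pi.single j (1:ℝ))

/-- ξ-Hessian ∇_ξ²φ(x,ξ). -/
def hessXi (n : ℕ) (φ : (Fin n → ℝ) → (Fin (n-1) → ℝ) → ℝ)
    (x : Fin n → ℝ) (ξ : Fin (n-1) → ℝ) : Matrix (Fin (n-1)) (Fin (n-1)) ℝ :=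
  Matrix.of fun i j => fderiv ℝ (fun η => gradXi n φ x η i) ξ (Pi.single j (1:ℝ))

/-- Mixed Hessian ∇_x∇_ξφ(x,ξ) : entry (i,j) is ∂_{x_i}∂_{ξ_j}φ. -/
def mixedHess (n : ℕ) (φ : (Fin n → ℝ) → (Fin (n-1) → ℝ) → ℝ)
    (x : Fin n → ℝ) (ξ : Fin (n-1) → ℝ) : Matrix (Fin n) (Fin (n-1)) ℝ :=
  Matrix.of fun i j => fderiv ℝ (fun y => gradXi n φ y ξ j) x (Pi.single i (1:ℝ))

/-- Gauss map: G(x,ξ)ᵢ = det(∂_{ξ_1}∇_xφ, …, ∂_{ξ_{n-1}}∇_xφ, eᵢ), so that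
⟨G(x,ξ), w⟩ = det(∂_{ξ_1}∇_xφ, …, ∂_{ξ_{n-1}}∇_xφ, w) for all w. -/
def gaussMap (n : ℕ) (φ : (Fin n → ℝ) → (Fin (n-1) → ℝ) → ℝ)
    (x : Fin n → ℝ) (ξ : Fin (n-1) → ℝ) : Fin n → ℝ :=
  fun i => Matrix.det (Matrix.of fun a b : Fin n =>
    if h : (b : ℕ) < n - 1 then mixedHess n φ x ξ a ⟨(b : ℕ), h⟩
    else (Pi.single i (1:ℝ) : Fin n → ℝ) a)

/-- Directional derivative (G(x,ξ)·∇_x) f at x. -/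
def GD (n : ℕ) (φ : (Fin n → ℝ) → (Fin (n-1) → ℝ) → ℝ)
    (f : (Fin n → ℝ) → ℝ) (ξ : Fin (n-1) → ℝ) (x : Fin n → ℝ) : ℝ :=
  fderiv ℝ f x (gaussMap n φ x ξ)

/-- The matrix (G(x,ξ)·∇_x)∇_ξ²φ(x,ξ). -/
def GDhess (n : ℕ) (φ : (Fin n → ℝ) → (Fin (n-1) → ℝ) → ℝ)
    (x : Fin n → ℝ) (ξ : Fin (n-1) → ℝ) : Matrix (Fin (n-1)) (Fin (n-1)) ℝ :=
  Matrix.of fun i j => GD n φ (fun y => hessXi n φ y ξ i j) ξ x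

/-- The matrix (G(x,ξ)·∇_x)²∇_ξ²φ(x,ξ). -/
def GD2hess (n : ℕ) (φ : (Fin n → ℝ) → (Fin (n-1) → ℝ) → ℝ)
    (x : Fin n → ℝ) (ξ : Fin (n-1) → ℝ) : Matrix (Fin (n-1)) (Fin (n-1)) ℝ :=
  Matrix.of fun i j => GD n φ (fun y => GD n φ (fun z => hessXi n φ z ξ i j) ξ y) ξ x

/-- Bourgain's condition on M × Σ. -/
def BourgainCond (n : ℕ) (φ : (Fin n → ℝ) → (Fin (n-1) → ℝ) → ℝ)
    (M : Set (Fin n → ℝ)) (Ω : Set (Fin (n-1) → ℝ)) : Prop :=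
  ∃ lam : (Fin n → ℝ) → (Fin (n-1) → ℝ) → ℝ,
    ∀ x ∈ M, ∀ ξ ∈ Ω, GD2hess n φ x ξ = lam x ξ • GDhess n φ x ξ

/-- Hörmander-type phase function: smooth, (H1) and (H2) on M × Σ. -/
def IsHormander (n : ℕ) (φ : (Fin n → ℝ) → (Fin (n-1) → ℝ) → ℝ)
    (M : Set (Fin n → ℝ)) (Ω : Set (Fin (n-1) → ℝ)) : Prop :=
  ContDiffOn ℝ (⊤ : ℕ∞) (fun q : (Fin n → ℝ) × (Fin (n-1) → ℝ) => φ q.1 q.2) (M ×ˢ Ω) ∧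
  (∀ x ∈ M, ∀ ξ ∈ Ω, (mixedHess n φ x ξ).rank = n - 1) ∧
  (∀ x ∈ M, ∀ ξ ∈ Ω, (GDhess n φ x ξ).det ≠ 0)

/-- The point (x̄, t) ∈ ℝⁿ. -/
def toPt (n : ℕ) (xb : Fin (n-1) → ℝ) (t : ℝ) : Fin n → ℝ :=
  fun i => if h : (i : ℕ) < n - 1 then xb ⟨(i : ℕ), h⟩ else t

/-- line_{ξ,v} = {(v,0) − s(ξ,1) : s ∈ ℝ} ⊆ ℝⁿ. -/
def lineSet (n : ℕ) (ξ v : Fin (n-1) → ℝ) : Set (Fin n → ℝ) :=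
  {p | ∃ s : ℝ, p = toPt n v 0 - s • toPt n ξ 1}

end

noncomputable section

/-- The tan-example phase function in ℝⁿ with n = m+3.  Coordinates:
x = (x′, x_{n-1}, t) with x′ = (x 0, …, x m), x_{n-1} = x (m+1), t = x (m+2);
ξ = (ξ′, ξ_{n-1}) with ξ′ = (ξ 0, …, ξ m), ξ_{n-1} = ξ (m+1).
φ(x,ξ) = x′·ξ′ + ½ t² |ξ′|² + log (sec (t ξ_{n-1} + x_{n-1})). -/
def φtan (m : ℕ) (x : Fin (m+3) → ℝ) (ξ : Fin (m+2) → ℝ) : ℝ :=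
  (∑ i : Fin (m+1), x (Fin.castLE (by omega) i) * ξ (Fin.castLE (by omega) i))
  + (1/2) * (x ⟨m+2, by omega⟩)^2 * (∑ i : Fin (m+1), (ξ (Fin.castLE (by omega) i))^2)
  + Real.log ((Real.cos (x ⟨m+2, by omega⟩ * ξ ⟨m+1, by omega⟩ + x ⟨m+1, by omega⟩))⁻¹)

/-- The unique solution x̄ of ∇_ξφ_{n,tan}((x̄,t),ξ) = v:
x′ = v′ − t²ξ′ and x_{n-1} = arctan(v_{n-1}/t) − t ξ_{n-1}. -/
def xsolTan (m : ℕ) (ξ v : Fin (m+2) → ℝ) (t : ℝ) : Fin (m+2) → ℝ :=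
  fun i => if (i : ℕ) < m+1 then v i - t^2 * ξ i
    else Real.arctan (v ⟨m+1, by omega⟩ / t) - t * ξ ⟨m+1, by omega⟩

/-- The φ_{n,tan}-curve ℓ_{ξ,v} = {(v′−t²ξ′, arctan(v_{n-1}/t) − tξ_{n-1}, t) : |t−1| ≤ 1/10}. -/
def ellTan (m : ℕ) (ξ v : Fin (m+2) → ℝ) : Set (Fin (m+3) → ℝ) :=
  {x | ∃ t : ℝ, |t - 1| ≤ 1/10 ∧ x = toPt (m+3) (xsolTan m ξ v t) t}


/-! The curves of the family through `p₀ = (0, 0, 1)` are parametrized by `(τ, s)`, with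
`x′ = ((t² - 1)/2) τ` and `x_{n-1} = arctan (s/t) - t arctan s`; at `t = 1` they have velocity
`w = (τ, φ(s), 1)` and acceleration `u = (τ, ψ(s), 0)`, where `φ = tanVel` and `ψ = tanAcc`.
If `F` maps each curve into a line `{(V, 0) - r (Ξ, 1)}`, then every coordinate `F_i` is an affine
function of the last coordinate `F_L` along the curve, so the first and second derivatives of
`F_i ∘ γ` and `F_L ∘ γ` at `t = 1` are proportional. Expanding in `s`, this says that
`k ψ(s)` is a cubic polynomial in `φ(s)`, with `k` a 2 × 2 minor of `DF(p₀)`. Invertibility of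
`DF(p₀)` gives some `τ` and `i` with `k ≠ 0`, whereas differentiating three times along `φ` shows
that `ψ` is not locally a cubic polynomial in `φ`. -/

open Real Polynomial

lemma toPt_succ {n : ℕ} (xb : Fin n → ℝ) (t : ℝ) : toPt (n+1) xb t = Fin.snoc xb t := by
  ext i
  induction i using Fin.lastCases <;> simp [toPt, Fin.snoc]

lemma apply_castSucc_of_mem_lineSet {n : ℕ} {ξ v : Fin n → ℝ} {y : Fin (n+1) → ℝ}
    (hy : y ∈ lineSet (n+1) ξ v) (i : Fin n) :
    y i.castSucc = v i + ξ i * y (Fin.last n) := by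
  obtain ⟨s, rfl⟩ := hy
  simp [toPt_succ]
  ring

lemma snoc_snoc_eq {n : ℕ} (τ : Fin n → ℝ) (a b : ℝ) :
    (Fin.snoc (Fin.snoc τ a) b : Fin (n+2) → ℝ) =
      Fin.snoc (Fin.snoc τ 0) 0 + a • Fin.snoc (Fin.snoc 0 1) 0 +
        b • Fin.snoc (Fin.snoc 0 0) 1 := by
  ext i
  induction i using Fin.lastCases with
  | last => simp
  | cast i => induction i using Fin.lastCases <;> simp

lemma snoc_snoc_eq_add_smul {n : ℕ} (τ : Fin n → ℝ) (a b : ℝ) :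
    (Fin.snoc (Fin.snoc τ a) b : Fin (n+2) → ℝ) =
      Fin.snoc (Fin.snoc τ 0) b + a • Fin.snoc (Fin.snoc 0 1) 0 := by
  ext i
  induction i using Fin.lastCases with
  | last => simp
  | cast i => induction i using Fin.lastCases <;> simp

lemma snoc_snoc_smul {n : ℕ} (τ : Fin n → ℝ) (c : ℝ) :
    (Fin.snoc (Fin.snoc (c • τ) 0) 0 : Fin (n+2) → ℝ) = c • Fin.snoc (Fin.snoc τ 0) 0 := by
  ext i
  induction i using Fin.lastCases with
  | last => simp
  | cast i => induction i using Fin.lastCases <;> simp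

lemma HasDerivAt.finSnoc {n : ℕ} {f : ℝ → Fin n → ℝ} {g : ℝ → ℝ} {f' : Fin n → ℝ} {g' t : ℝ}
    (hf : HasDerivAt f f' t) (hg : HasDerivAt g g' t) :
    HasDerivAt (fun t => (Fin.snoc (f t) (g t) : Fin (n+1) → ℝ)) (Fin.snoc f' g') t := by
  rw [hasDerivAt_pi] at hf ⊢
  intro i
  induction i using Fin.lastCases <;> simp [hf, hg]

section Calculus

variable {E F : Type*} [NormedAddCommGroup E] [NormedSpace ℝ E]
  [NormedAddCommGroup F] [NormedSpace ℝ F]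

lemma injective_fderiv_of_eventually_leftInverse {f : E → F} {g : F → E} {x : E}
    (hf : DifferentiableAt ℝ f x) (hg : DifferentiableAt ℝ g (f x))
    (hgf : ∀ᶠ y in 𝓝 x, g (f y) = y) : Function.Injective (fderiv ℝ f x) := by
  have hcomp : (fderiv ℝ g (f x)).comp (fderiv ℝ f x) = ContinuousLinearMap.id ℝ E :=
    ((hg.hasFDerivAt.comp x hf.hasFDerivAt).congr_of_eventuallyEq
      (hgf.mono fun _ hy => hy.symm)).unique (hasFDerivAt_id x)
  exact Function.LeftInverse.injective (g := fderiv ℝ g (f x)) fun y => congrArg (· y) hcomp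

lemma hasDerivAt_fderiv_comp_apply {f : E → F} {γ γ' : ℝ → E} {t₀ : ℝ} {u : E}
    (hf : ContDiffAt ℝ 2 f (γ t₀)) (hγ : HasDerivAt γ (γ' t₀) t₀) (hγ' : HasDerivAt γ' u t₀) :
    HasDerivAt (fun t => fderiv ℝ f (γ t) (γ' t))
      (fderiv ℝ (fderiv ℝ f) (γ t₀) (γ' t₀) (γ' t₀) + fderiv ℝ f (γ t₀) u) t₀ := by
  have hf' : DifferentiableAt ℝ (fderiv ℝ f) (γ t₀) :=
    (hf.fderiv_right (m := 1) (by norm_num)).differentiableAt (by norm_num)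
  exact (hf'.hasFDerivAt.comp_hasDerivAt t₀ hγ).clm_apply hγ'

lemma mul_eq_mul_of_eventuallyEq_affine {φ ψ d e : ℝ → ℝ} {t₀ a b c₁ c₂ : ℝ}
    (hφ : ∀ᶠ t in 𝓝 t₀, HasDerivAt φ (d t) t) (hψ : ∀ᶠ t in 𝓝 t₀, HasDerivAt ψ (e t) t)
    (hd : HasDerivAt d c₁ t₀) (he : HasDerivAt e c₂ t₀)
    (h : φ =ᶠ[𝓝 t₀] fun t => a + b * ψ t) : c₁ * e t₀ = c₂ * d t₀ := by
  have hde : d =ᶠ[𝓝 t₀] fun t => b * e t := by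
    filter_upwards [hφ, hψ, h.eventuallyEq_nhds] with t hφt hψt ht
    exact hφt.unique (((hψt.const_mul b).const_add a).congr_of_eventuallyEq ht)
  have hc : c₁ = b * c₂ := hd.unique ((he.const_mul b).congr_of_eventuallyEq hde)
  rw [hc, hde.self_of_nhds]
  ring

lemma fderiv_mul_eq_mul_of_eventually_affine {f g : E → ℝ} {γ γ' : ℝ → E} {t₀ a b : ℝ} {u : E}
    (hf : ContDiffAt ℝ 2 f (γ t₀)) (hg : ContDiffAt ℝ 2 g (γ t₀))
    (hγ : ∀ᶠ t in 𝓝 t₀, HasDerivAt γ (γ' t) t) (hγ' : HasDerivAt γ' u t₀)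
    (h : ∀ᶠ t in 𝓝 t₀, f (γ t) = a + b * g (γ t)) :
    (fderiv ℝ (fderiv ℝ f) (γ t₀) (γ' t₀) (γ' t₀) + fderiv ℝ f (γ t₀) u) *
        fderiv ℝ g (γ t₀) (γ' t₀) =
      (fderiv ℝ (fderiv ℝ g) (γ t₀) (γ' t₀) (γ' t₀) + fderiv ℝ g (γ t₀) u) *
        fderiv ℝ f (γ t₀) (γ' t₀) := by
  have hγ₀ := hγ.self_of_nhds
  have hnear : ∀ {k : E → ℝ}, ContDiffAt ℝ 2 k (γ t₀) →
      ∀ᶠ t in 𝓝 t₀, HasDerivAt (fun t => k (γ t)) (fderiv ℝ k (γ t) (γ' t)) t := by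
    intro k hk
    filter_upwards [hγ₀.continuousAt.tendsto.eventually (hk.eventually (by simp)), hγ]
      with t hkt hγt
    exact (hkt.differentiableAt (by norm_num)).hasFDerivAt.comp_hasDerivAt t hγt
  exact mul_eq_mul_of_eventuallyEq_affine (hnear hf) (hnear hg)
    (hasDerivAt_fderiv_comp_apply hf hγ₀ hγ') (hasDerivAt_fderiv_comp_apply hg hγ₀ hγ') h

end Calculus

lemma Polynomial.eventuallyEq_derivative_eval_comp {q : ℝ[X]} {g g' r r₁ : ℝ → ℝ} {a : ℝ}
    (h : (fun s => q.eval (g s)) =ᶠ[𝓝 a] r) (hg : ∀ s, HasDerivAt g (g' s) s)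
    (hg' : ∀ s, g' s ≠ 0) (hr : ∀ s, HasDerivAt r (r₁ s * g' s) s) :
    (fun s => q.derivative.eval (g s)) =ᶠ[𝓝 a] r₁ := by
  filter_upwards [h.eventuallyEq_nhds] with s hs
  have hcomp := ((q.hasDerivAt (g s)).comp s (hg s)).congr_of_eventuallyEq hs.symm
  exact mul_right_cancel₀ (hg' s) (hcomp.unique (hr s))

lemma exists_cubic_eval_eq {E : Type*} [NormedAddCommGroup E] [NormedSpace ℝ E]
    (B₁ B₂ : E →L[ℝ] E →L[ℝ] ℝ) (l₁ l₂ : E →L[ℝ] ℝ) (P Q e : E) :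
    ∃ p : ℝ[X], p.natDegree ≤ 3 ∧ ∀ X Y : ℝ,
      (B₁ (P + X • e) (P + X • e) + l₁ (Q + Y • e)) * l₂ (P + X • e) -
        (B₂ (P + X • e) (P + X • e) + l₂ (Q + Y • e)) * l₁ (P + X • e) =
      (l₁ e * l₂ P - l₂ e * l₁ P) * Y + p.eval X := by
  let quad (B : E →L[ℝ] E →L[ℝ] ℝ) (l : E →L[ℝ] ℝ) : ℝ[X] :=
    C (B P P + l Q) + C (B P e + B e P) * X + C (B e e) * X^2
  let lin (l : E →L[ℝ] ℝ) : ℝ[X] := C (l P) + C (l e) * X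
  refine ⟨quad B₁ l₁ * lin l₂ - quad B₂ l₂ * lin l₁, ?_, fun X Y => ?_⟩
  · simp only [quad, lin]
    compute_degree
  · simp only [quad, lin, map_add, map_smul, add_apply, smul_apply, smul_eq_mul, eval_sub,
      eval_mul, eval_add, eval_C, eval_X, eval_pow]
    ring

lemma smul_eq_smul_of_injective {ι E : Type*} [NormedAddCommGroup E] [NormedSpace ℝ E]
    {A : E →L[ℝ] ι → ℝ} (hA : Function.Injective A) {e x : E} {j : ι}
    (h : ∀ i, A e i * A x j = A e j * A x i) : A x j • e = A e j • x :=
  hA <| by ext i; simp [h i, mul_comm]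

lemma ContinuousLinearMap.eq_zero_of_eventually_snoc_snoc {n : ℕ}
    (ℓ : (Fin (n+2) → ℝ) →L[ℝ] ℝ) (he : ℓ (Fin.snoc (Fin.snoc 0 1) 0) = 0)
    (hP : ∀ᶠ τ in 𝓝 (0 : Fin n → ℝ), ℓ (Fin.snoc (Fin.snoc τ 0) 1) = 0) : ℓ = 0 := by
  have het : ℓ (Fin.snoc (Fin.snoc 0 0) 1) = 0 := hP.self_of_nhds
  have hT : ∀ τ : Fin n → ℝ, ℓ (Fin.snoc (Fin.snoc τ 0) 0) = 0 := by
    intro τ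
    have hsmul : Filter.Tendsto (fun c : ℝ => c • τ) (𝓝 0) (𝓝 0) := by
      simpa using (Filter.tendsto_id (x := 𝓝 (0:ℝ))).smul_const τ
    obtain ⟨c, hc0, hc⟩ := (hsmul.eventually hP).exists_gt
    rw [snoc_snoc_eq, snoc_snoc_smul] at hc
    simp only [map_add, map_smul, smul_eq_mul, het, zero_smul, one_smul, add_zero] at hc
    exact (mul_eq_zero.1 hc).resolve_left hc0.ne'
  ext x
  rw [← Fin.snoc_init_self x, ← Fin.snoc_init_self (Fin.init x), snoc_snoc_eq]
  simp [hT, he, het]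

lemma frequently_exists_mul_sub_mul_ne_zero {m : ℕ}
    {A : (Fin (m+3) → ℝ) →L[ℝ] (Fin (m+3) → ℝ)} (hA : Function.Injective A) :
    ∃ᶠ τ in 𝓝 (0 : Fin (m+1) → ℝ), ∃ i : Fin (m+2),
      A (Fin.snoc (Fin.snoc 0 1) 0) i.castSucc * A (Fin.snoc (Fin.snoc τ 0) 1) (Fin.last _) -
        A (Fin.snoc (Fin.snoc 0 1) 0) (Fin.last _) * A (Fin.snoc (Fin.snoc τ 0) 1) i.castSucc
        ≠ 0 := by
  set ℓ := (ContinuousLinearMap.proj (Fin.last (m+2))).comp A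
  intro h
  -- If all minors vanish, injectivity gives `ℓ P • e = ℓ e • P` for `P = (τ, 0, 1)` and
  -- `e = (0, 1, 0)`; comparing the last two coordinates, `ℓ P = ℓ e = 0`.
  have hvanish : ∀ᶠ τ in 𝓝 (0 : Fin (m+1) → ℝ),
      ℓ (Fin.snoc (Fin.snoc τ 0) 1) = 0 ∧ ℓ (Fin.snoc (Fin.snoc 0 1) 0) = 0 := by
    filter_upwards [h] with τ hτ
    push Not at hτ
    have hpar := smul_eq_smul_of_injective hA (e := Fin.snoc (Fin.snoc 0 1) 0)
      (x := Fin.snoc (Fin.snoc τ 0) 1) (j := Fin.last _) fun i => by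
        induction i using Fin.lastCases with
        | last => rfl
        | cast i => linarith [hτ i]
    have hlast := congrFun hpar (Fin.last _)
    have hy := congrFun hpar (Fin.last _).castSucc
    simp at hlast hy
    exact ⟨hy, hlast.symm⟩
  have hℓ : ℓ = 0 := ℓ.eq_zero_of_eventually_snoc_snoc hvanish.self_of_nhds.2
    (hvanish.mono fun _ h => h.1)
  obtain ⟨x, hx⟩ := (LinearMap.injective_iff_surjective
    (f := (A : (Fin (m+3) → ℝ) →ₗ[ℝ] (Fin (m+3) → ℝ)))).1 hA (Pi.single (Fin.last _) 1)
  have hℓx := congrArg (· x) hℓ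
  simp [ℓ, show A x = _ from hx] at hℓx

def tanVel (s : ℝ) : ℝ := -(s / (1 + s^2)) - arctan s

def tanAcc (s : ℝ) : ℝ := 2 * s / (1 + s^2)^2

lemma hasDerivAt_tanVel (s : ℝ) : HasDerivAt tanVel (-2 / (1 + s^2)^2) s := by
  have h1 : (1 : ℝ) + s^2 ≠ 0 := by positivity
  refine ((((hasDerivAt_id s).div ((hasDerivAt_pow 2 s).const_add 1) h1).neg).sub
    (hasDerivAt_arctan s)).congr_deriv ?_
  simp only [id]
  field_simp
  ring

lemma not_eventually_tanAcc_eq_eval_tanVel (p : ℝ[X]) (hp : p.natDegree ≤ 3) :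
    ¬ ∀ᶠ s in 𝓝 0, tanAcc s = p.eval (tanVel s) := by
  intro h
  have hpos : ∀ s : ℝ, (0 : ℝ) < 1 + s^2 := fun s => by positivity
  have hVel' : ∀ s : ℝ, -2 / (1 + s^2)^2 ≠ 0 := fun s => by have := hpos s; positivity
  have h₁ : (fun s => p.derivative.eval (tanVel s)) =ᶠ[𝓝 0]
      fun s => (3 * s^2 - 1) / (1 + s^2) := by
    refine eventuallyEq_derivative_eval_comp (h.mono fun s hs => hs.symm) hasDerivAt_tanVel
      hVel' fun s => ?_
    have := hpos s
    refine (((hasDerivAt_id s).const_mul 2).div (((hasDerivAt_pow 2 s).const_add 1).pow 2)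
      (pow_pos this 2).ne').congr_deriv ?_
    simp only [id, Pi.pow_apply]
    field_simp
    ring
  have h₂ : (fun s => p.derivative.derivative.eval (tanVel s)) =ᶠ[𝓝 0] fun s => -4 * s := by
    refine eventuallyEq_derivative_eval_comp h₁ hasDerivAt_tanVel hVel' fun s => ?_
    have := hpos s
    refine ((((hasDerivAt_pow 2 s).const_mul 3).sub_const 1).div
      ((hasDerivAt_pow 2 s).const_add 1) this.ne').congr_deriv ?_
    field_simp
    ring
  have h₃ : (fun s => p.derivative.derivative.derivative.eval (tanVel s)) =ᶠ[𝓝 0]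
      fun s => 2 * (1 + s^2)^2 := by
    refine eventuallyEq_derivative_eval_comp h₂ hasDerivAt_tanVel hVel' fun s => ?_
    have := hpos s
    refine ((hasDerivAt_id s).const_mul (-4)).congr_deriv ?_
    field_simp
    norm_num
  have hdeg := natDegree_iterate_derivative p 3
  simp only [Function.iterate_succ, Function.comp_apply, Function.iterate_zero, id] at hdeg
  rw [eq_C_of_natDegree_le_zero (by omega : p.derivative.derivative.derivative.natDegree ≤ 0)]
    at h₃
  have h₀ := h₃.self_of_nhds
  obtain ⟨s, hs, hs'⟩ := h₃.exists_gt
  simp only [eval_C] at h₀ hs'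
  nlinarith [pow_pos hs 2]

lemma not_eventually_mul_tanAcc_add_eval_tanVel {k : ℝ} (hk : k ≠ 0) (p : ℝ[X])
    (hp : p.natDegree ≤ 3) : ¬ ∀ᶠ s in 𝓝 0, k * tanAcc s + p.eval (tanVel s) = 0 := fun h =>
  not_eventually_tanAcc_eq_eval_tanVel (C (-k⁻¹) * p) ((natDegree_C_mul_le _ _).trans hp) <|
    h.mono fun s hs => by
      rw [eval_mul, eval_C]
      field_simp
      linear_combination hs

section TanCurves

variable {m : ℕ}

def tanXi (τ : Fin (m+1) → ℝ) (s : ℝ) : Fin (m+2) → ℝ := Fin.snoc (-(1/2 : ℝ) • τ) (arctan s)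

def tanV (τ : Fin (m+1) → ℝ) (s : ℝ) : Fin (m+2) → ℝ := Fin.snoc (-(1/2 : ℝ) • τ) s

def tanCurve (τ : Fin (m+1) → ℝ) (s t : ℝ) : Fin (m+3) → ℝ :=
  Fin.snoc (Fin.snoc (((t^2 - 1) / 2) • τ) (arctan (s / t) - t * arctan s)) t

def tanCurveVel (τ : Fin (m+1) → ℝ) (s t : ℝ) : Fin (m+3) → ℝ :=
  Fin.snoc (Fin.snoc (t • τ) (-s / (t^2 + s^2) - arctan s)) 1

lemma tanCurve_mem_ellTan (τ : Fin (m+1) → ℝ) (s : ℝ) {t : ℝ} (ht : |t - 1| ≤ 1/10) :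
    tanCurve τ s t ∈ ellTan m (tanXi τ s) (tanV τ s) := by
  refine ⟨t, ht, ?_⟩
  rw [toPt_succ, tanCurve]
  congr 1
  ext i
  induction i using Fin.lastCases with
  | last => simp [xsolTan, tanXi, tanV, Fin.snoc]
  | cast i =>
    simp [xsolTan, tanXi, tanV, Fin.is_le]
    ring

lemma tanCurve_one (τ : Fin (m+1) → ℝ) (s : ℝ) :
    tanCurve τ s 1 = toPt (m+3) (fun _ => 0) 1 := by
  rw [toPt_succ, tanCurve]
  congr 1
  ext i
  induction i using Fin.lastCases <;> simp

lemma tanCurveVel_one (τ : Fin (m+1) → ℝ) (s : ℝ) :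
    tanCurveVel τ s 1 = Fin.snoc (Fin.snoc τ (tanVel s)) 1 := by
  simp [tanCurveVel, tanVel, neg_div]

lemma hasDerivAt_tanCurve (τ : Fin (m+1) → ℝ) (s : ℝ) {t : ℝ} (ht : t ≠ 0) :
    HasDerivAt (tanCurve τ s) (tanCurveVel τ s t) t := by
  have harctan : HasDerivAt (fun t => arctan (s / t)) (-s / (t^2 + s^2)) t := by
    refine ((hasDerivAt_arctan _).comp t
      ((hasDerivAt_const t s).div (hasDerivAt_id t) ht)).congr_deriv ?_
    have : t^2 + s^2 ≠ 0 := by positivity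
    simp only [id, Pi.div_apply]
    field_simp
    ring
  refine HasDerivAt.finSnoc (HasDerivAt.finSnoc ?_ (harctan.sub ?_)) (hasDerivAt_id t)
  · refine ((((hasDerivAt_pow 2 t).sub_const 1).div_const 2).smul_const τ).congr_deriv ?_
    simp
  · simpa using (hasDerivAt_id t).mul_const (arctan s)

lemma hasDerivAt_tanCurveVel (τ : Fin (m+1) → ℝ) (s : ℝ) :
    HasDerivAt (tanCurveVel τ s) (Fin.snoc (Fin.snoc τ (tanAcc s)) 0) 1 := by
  refine HasDerivAt.finSnoc (HasDerivAt.finSnoc ?_ ?_) (hasDerivAt_const _ _)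
  · simpa using (hasDerivAt_id (1:ℝ)).smul_const τ
  · have hden : HasDerivAt (fun t : ℝ => t^2 + s^2) 2 1 := by
      simpa using (hasDerivAt_pow 2 (1:ℝ)).add_const (s^2)
    refine (((hasDerivAt_const (1:ℝ) (-s)).div hden (by positivity)).sub_const
      (arctan s)).congr_deriv ?_
    simp [tanAcc]
    ring

lemma tanXi_zero_tanV_zero : (tanXi (0 : Fin (m+1) → ℝ) 0, tanV (0 : Fin (m+1) → ℝ) 0) = 0 := by
  refine Prod.ext ?_ ?_ <;> ext i <;> induction i using Fin.lastCases <;> simp [tanXi, tanV]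

lemma eventually_tanXi_tanV_mem {U : Set ((Fin (m+2) → ℝ) × (Fin (m+2) → ℝ))}
    (hU : U ∈ 𝓝 0) :
    ∀ᶠ τ in 𝓝 (0 : Fin (m+1) → ℝ), ∀ᶠ s in 𝓝 (0 : ℝ), (tanXi τ s, tanV τ s) ∈ U := by
  have hcont : Continuous fun q : (Fin (m+1) → ℝ) × ℝ => (tanXi q.1 q.2, tanV q.1 q.2) := by
    unfold tanXi tanV
    fun_prop
  rw [← tanXi_zero_tanV_zero] at hU
  have : ∀ᶠ q in 𝓝 ((0 : Fin (m+1) → ℝ), (0 : ℝ)), (tanXi q.1 q.2, tanV q.1 q.2) ∈ U :=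
    hcont.continuousAt.preimage_mem_nhds hU
  rw [nhds_prod_eq] at this
  exact this.curry

lemma tanCurve_relation {F : (Fin (m+3) → ℝ) → (Fin (m+3) → ℝ)} {ε₀ : ℝ} (hε₀ : 0 < ε₀)
    (hF : ContDiffAt ℝ 2 F (toPt (m+3) (fun _ => 0) 1)) {τ : Fin (m+1) → ℝ} {s : ℝ}
    {ξ v : Fin (m+2) → ℝ}
    (hline : F '' (ellTan m (tanXi τ s) (tanV τ s) ∩ ball (toPt (m+3) (fun _ => 0) 1) ε₀) ⊆
      lineSet (m+3) ξ v) (i : Fin (m+2)) :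
    let p₀ := toPt (m+3) (fun _ => 0) 1
    let w : Fin (m+3) → ℝ := Fin.snoc (Fin.snoc τ (tanVel s)) 1
    let u : Fin (m+3) → ℝ := Fin.snoc (Fin.snoc τ (tanAcc s)) 0
    (fderiv ℝ (fderiv ℝ (fun x => F x i.castSucc)) p₀ w w + fderiv ℝ F p₀ u i.castSucc) *
        fderiv ℝ F p₀ w (Fin.last _) =
      (fderiv ℝ (fderiv ℝ (fun x => F x (Fin.last _))) p₀ w w + fderiv ℝ F p₀ u (Fin.last _)) *
        fderiv ℝ F p₀ w i.castSucc := by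
  intro p₀ w u
  have hcurve : ∀ᶠ t in 𝓝 1, HasDerivAt (tanCurve τ s) (tanCurveVel τ s t) t :=
    (eventually_ne_nhds one_ne_zero).mono fun t ht => hasDerivAt_tanCurve τ s ht
  have hball : ∀ᶠ t in 𝓝 1, tanCurve τ s t ∈ ball p₀ ε₀ :=
    hcurve.self_of_nhds.continuousAt.eventually_mem (by
      rw [tanCurve_one]; exact ball_mem_nhds _ hε₀)
  have hnear : ∀ᶠ t in 𝓝 (1 : ℝ), |t - 1| ≤ 1/10 := by
    filter_upwards [closedBall_mem_nhds (1 : ℝ) (by norm_num : (0 : ℝ) < 1/10)] with t ht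
    rwa [mem_closedBall, Real.dist_eq] at ht
  have haffine : ∀ᶠ t in 𝓝 1, F (tanCurve τ s t) i.castSucc =
      v i + ξ i * F (tanCurve τ s t) (Fin.last _) := by
    filter_upwards [hball, hnear] with t hb ht
    exact apply_castSucc_of_mem_lineSet (hline ⟨_, ⟨tanCurve_mem_ellTan τ s ht, hb⟩, rfl⟩) i
  have hF' : ContDiffAt ℝ 2 F (tanCurve τ s 1) := by rwa [tanCurve_one]
  have key := fderiv_mul_eq_mul_of_eventually_affine (contDiffAt_pi.1 hF' i.castSucc)
    (contDiffAt_pi.1 hF' (Fin.last _)) hcurve (hasDerivAt_tanCurveVel τ s) haffine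
  have hdiff : DifferentiableAt ℝ F p₀ := hF.differentiableAt (by norm_num)
  rw [tanCurve_one, tanCurveVel_one, fderiv_apply hdiff, fderiv_apply hdiff] at key
  exact key

lemma exists_cubic_tanAcc_relation {F : (Fin (m+3) → ℝ) → (Fin (m+3) → ℝ)} {ε₀ : ℝ}
    (hε₀ : 0 < ε₀) (hF : ContDiffAt ℝ 2 F (toPt (m+3) (fun _ => 0) 1))
    (τ : Fin (m+1) → ℝ) (i : Fin (m+2)) :
    ∃ p : ℝ[X], p.natDegree ≤ 3 ∧ ∀ (s : ℝ) (ξ v : Fin (m+2) → ℝ),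
      F '' (ellTan m (tanXi τ s) (tanV τ s) ∩ ball (toPt (m+3) (fun _ => 0) 1) ε₀) ⊆
        lineSet (m+3) ξ v →
      (fderiv ℝ F (toPt (m+3) (fun _ => 0) 1) (Fin.snoc (Fin.snoc 0 1) 0) i.castSucc *
          fderiv ℝ F (toPt (m+3) (fun _ => 0) 1) (Fin.snoc (Fin.snoc τ 0) 1) (Fin.last _) -
        fderiv ℝ F (toPt (m+3) (fun _ => 0) 1) (Fin.snoc (Fin.snoc 0 1) 0) (Fin.last _) *
          fderiv ℝ F (toPt (m+3) (fun _ => 0) 1) (Fin.snoc (Fin.snoc τ 0) 1) i.castSucc) *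
        tanAcc s + p.eval (tanVel s) = 0 := by
  obtain ⟨p, hp, hpeval⟩ := exists_cubic_eval_eq
    (fderiv ℝ (fderiv ℝ (fun x => F x i.castSucc)) (toPt (m+3) (fun _ => 0) 1))
    (fderiv ℝ (fderiv ℝ (fun x => F x (Fin.last _))) (toPt (m+3) (fun _ => 0) 1))
    ((ContinuousLinearMap.proj i.castSucc).comp (fderiv ℝ F (toPt (m+3) (fun _ => 0) 1)))
    ((ContinuousLinearMap.proj (Fin.last _)).comp (fderiv ℝ F (toPt (m+3) (fun _ => 0) 1)))
    (Fin.snoc (Fin.snoc τ 0) 1) (Fin.snoc (Fin.snoc τ 0) 0) (Fin.snoc (Fin.snoc 0 1) 0)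
  refine ⟨p, hp, fun s ξ v hline => ?_⟩
  have hrel := tanCurve_relation hε₀ hF hline i
  dsimp only at hrel
  rw [snoc_snoc_eq_add_smul τ (tanVel s), snoc_snoc_eq_add_smul τ (tanAcc s)] at hrel
  have hcubic := hpeval (tanVel s) (tanAcc s)
  simp only [ContinuousLinearMap.comp_apply, ContinuousLinearMap.proj_apply] at hcubic
  rw [sub_eq_zero.2 hrel] at hcubic
  linarith

end TanCurves

theorem stmt15 (m : ℕ) (ε₀ : ℝ) (hε₀ : 0 < ε₀) :
    ¬ ∃ (F Finv : (Fin (m+3) → ℝ) → (Fin (m+3) → ℝ))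
        (Ξ V : (Fin (m+2) → ℝ) × (Fin (m+2) → ℝ) → (Fin (m+2) → ℝ))
        (U : Set ((Fin (m+2) → ℝ) × (Fin (m+2) → ℝ))),
      ContDiffOn ℝ (⊤ : ℕ∞) F (ball (toPt (m+3) (fun _ => (0:ℝ)) 1) ε₀) ∧
      InjOn F (ball (toPt (m+3) (fun _ => (0:ℝ)) 1) ε₀) ∧
      IsOpen (F '' ball (toPt (m+3) (fun _ => (0:ℝ)) 1) ε₀) ∧
      ContDiffOn ℝ (⊤ : ℕ∞) Finv (F '' ball (toPt (m+3) (fun _ => (0:ℝ)) 1) ε₀) ∧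
      (∀ y ∈ ball (toPt (m+3) (fun _ => (0:ℝ)) 1) ε₀, Finv (F y) = y) ∧
      U ∈ 𝓝 ((0, 0) : (Fin (m+2) → ℝ) × (Fin (m+2) → ℝ)) ∧
      ∀ p ∈ U, F '' (ellTan m p.1 p.2 ∩ ball (toPt (m+3) (fun _ => (0:ℝ)) 1) ε₀) ⊆
        lineSet (m+3) (Ξ p) (V p) := by
  rintro ⟨F, Finv, Ξ, V, U, hF, -, hopen, hFinv, hleft, hU, hline⟩
  have hball := ball_mem_nhds (toPt (m+3) (fun _ => (0:ℝ)) 1) hε₀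
  have hF₂ : ContDiffAt ℝ 2 F (toPt (m+3) (fun _ => 0) 1) :=
    (hF.contDiffAt hball).of_le (WithTop.coe_le_coe.2 le_top)
  have hFinv₁ : DifferentiableAt ℝ Finv (F (toPt (m+3) (fun _ => 0) 1)) :=
    (hFinv.contDiffAt (hopen.mem_nhds (mem_image_of_mem F (mem_ball_self hε₀)))).differentiableAt
      (by simp)
  have hA := injective_fderiv_of_eventually_leftInverse (hF₂.differentiableAt (by norm_num))
    hFinv₁ (Filter.mem_of_superset hball hleft)
  obtain ⟨τ, ⟨i, hk⟩, hτU⟩ := ((frequently_exists_mul_sub_mul_ne_zero hA).and_eventually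
    (eventually_tanXi_tanV_mem hU)).exists
  obtain ⟨p, hp, hrel⟩ := exists_cubic_tanAcc_relation hε₀ hF₂ τ i
  exact not_eventually_mul_tanAcc_add_eval_tanVel hk p hp
    (hτU.mono fun s hs => hrel s _ _ (hline (tanXi τ s, tanV τ s) hs))
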